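/- For any real θ > 0 and positive integer n, ∑_{i=1}^n (p_i(1-p_i))² ≤ θ{1/3 - θ/(n+θ) + θ²/(n+θ)² - θ³/(3(n+θ)³)} + 2, where p_i = θ/(θ+i-1). -/
import Mathlib

open Real Finset

private lemma keyA (θ x : ℝ) (hθ : 0 < θ) (hx : 0 ≤ x) (h1 : x + 1 ≤ θ) :
    θ^2*x^2/(θ+x)^4 ≤ θ*(x+1)^3/(3*(θ+x+1)^3) - θ*x^3/(3*(θ+x)^3) := by
  obtain ⟨s, hs, rfl⟩ : ∃ s, 0 ≤ s ∧ θ = x + 1 + s := ⟨θ - x - 1, by linarith, by ring⟩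
  have ha : (0:ℝ) < (x+1+s)+x := by linarith
  have hb : (0:ℝ) < (x+1+s)+x+1 := by linarith
  have key : 0 ≤ (x+1)^3*((x+1+s)+x)^4 - x^3*((x+1+s)+x+1)^3*((x+1+s)+x)
      - 3*(x+1+s)*x^2*((x+1+s)+x+1)^3 := by
    nlinarith [mul_nonneg (pow_nonneg hx 0) (pow_nonneg hs 1), mul_nonneg (pow_nonneg hx 0) (pow_nonneg hs 2), mul_nonneg (pow_nonneg hx 0) (pow_nonneg hs 3), mul_nonneg (pow_nonneg hx 0) (pow_nonneg hs 4), mul_nonneg (pow_nonneg hx 1) (pow_nonneg hs 0), mul_nonneg (pow_nonneg hx 1) (pow_nonneg hs 1), mul_nonneg (pow_nonneg hx 1) (pow_nonneg hs 2), mul_nonneg (pow_nonneg hx 1) (pow_nonneg hs 3), mul_nonneg (pow_nonneg hx 1) (pow_nonneg hs 4), mul_nonneg (pow_nonneg hx 2) (pow_nonneg hs 0), mul_nonneg (pow_nonneg hx 2) (pow_nonneg hs 1), mul_nonneg (pow_nonneg hx 2) (pow_nonneg hs 2), mul_nonneg (pow_nonneg hx 2) (pow_nonneg hs 3), mul_nonneg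 (pow_nonneg hx 3) (pow_nonneg hs 0), mul_nonneg (pow_nonneg hx 3) (pow_nonneg hs 1), mul_nonneg (pow_nonneg hx 3) (pow_nonneg hs 2), mul_nonneg (pow_nonneg hx 4) (pow_nonneg hs 0), mul_nonneg (pow_nonneg hx 4) (pow_nonneg hs 1)]
  rw [← sub_nonneg]
  have heq : (x+1+s)*(x+1)^3/(3*((x+1+s)+x+1)^3) - (x+1+s)*x^3/(3*((x+1+s)+x)^3)
      - (x+1+s)^2*x^2/((x+1+s)+x)^4
      = (x+1+s) * ((x+1)^3*((x+1+s)+x)^4 - x^3*((x+1+s)+x+1)^3*((x+1+s)+x)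
          - 3*(x+1+s)*x^2*((x+1+s)+x+1)^3) / (3*((x+1+s)+x+1)^3*((x+1+s)+x)^4) := by
    field_simp
  rw [heq]
  have hθ' : (0:ℝ) ≤ x+1+s := by linarith
  positivity
  
private lemma keyB (θ x : ℝ) (hθ : 0 < θ) (hx : θ ≤ x) :
    θ^2*(x+1)^2/(θ+x+1)^4 ≤ θ*(x+1)^3/(3*(θ+x+1)^3) - θ*x^3/(3*(θ+x)^3) := by
  obtain ⟨s, hs, rfl⟩ : ∃ s, 0 ≤ s ∧ x = θ + s := ⟨x - θ, by linarith, by ring⟩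
  have ht : (0:ℝ) ≤ θ := hθ.le
  have ha : (0:ℝ) < θ+(θ+s) := by linarith
  have hb : (0:ℝ) < θ+(θ+s)+1 := by linarith
  have key : 0 ≤ ((θ+s)+1)^3*(θ+(θ+s))^3*(θ+(θ+s)+1) - (θ+s)^3*(θ+(θ+s)+1)^4
      - 3*θ*((θ+s)+1)^2*(θ+(θ+s))^3 := by
    nlinarith [mul_nonneg (pow_nonneg ht 1) (pow_nonneg hs 2), mul_nonneg (pow_nonneg ht 1) (pow_nonneg hs 3), mul_nonneg (pow_nonneg ht 1) (pow_nonneg hs 4), mul_nonneg (pow_nonneg ht 2) (pow_nonneg hs 1), mul_nonneg (pow_nonneg ht 2) (pow_nonneg hs 2), mul_nonneg (pow_nonneg ht 2) (pow_nonneg hs 3), mul_nonneg (pow_nonneg ht 3) (pow_nonneg hs 0), mul_nonneg (pow_nonneg ht 3) (pow_nonneg hs 1), mul_nonneg (pow_nonneg ht 3) (pow_nonneg hs 2), mul_nonneg (pow_nonneg ht 4) (pow_nonneg hs 0), mul_nonneg (pow_nonneg ht 4) (pow_nonneg hs 1)]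
  rw [← sub_nonneg]
  have heq : θ*((θ+s)+1)^3/(3*(θ+(θ+s)+1)^3) - θ*(θ+s)^3/(3*(θ+(θ+s))^3)
      - θ^2*((θ+s)+1)^2/(θ+(θ+s)+1)^4
      = θ * (((θ+s)+1)^3*(θ+(θ+s))^3*(θ+(θ+s)+1) - (θ+s)^3*(θ+(θ+s)+1)^4
          - 3*θ*((θ+s)+1)^2*(θ+(θ+s))^3) / (3*(θ+(θ+s))^3*(θ+(θ+s)+1)^4) := by
    field_simp
  rw [heq]
  positivity

private lemma fbound (θ x : ℝ) (hθ : 0 < θ) (hx : 0 ≤ x) :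
    θ^2*x^2/(θ+x)^4 ≤ 1/16 := by
  have ha : (0:ℝ) < θ+x := by linarith
  rw [div_le_iff₀ (by positivity)]
  nlinarith [sq_nonneg (θ-x), sq_nonneg (θ+x), mul_nonneg hθ.le hx, sq_nonneg ((θ-x)*(θ+x)), mul_nonneg (mul_nonneg hθ.le hx) (sq_nonneg (θ-x))]

private lemma Fmono (θ x : ℝ) (hθ : 0 < θ) (hx : 0 ≤ x) :
    θ*x^3/(3*(θ+x)^3) ≤ θ*(x+1)^3/(3*(θ+x+1)^3) := by
  have ha : (0:ℝ) < θ+x := by linarith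
  have hb : (0:ℝ) < θ+x+1 := by linarith
  rw [div_le_div_iff₀ (by positivity) (by positivity)]
  have h3 : (x*(θ+x+1))^3 ≤ ((x+1)*(θ+x))^3 := by
    apply pow_le_pow_left₀ (by positivity)
    nlinarith
  nlinarith [mul_le_mul_of_nonneg_left h3 (by positivity : (0:ℝ) ≤ 3*θ)]

private lemma aux (θ : ℝ) (hθ : 0 < θ) (n : ℕ) :
    (∑ i ∈ Finset.range n, θ^2*(i:ℝ)^2/(θ+i)^4)
      + (if θ ≤ (n:ℝ) then θ^2*(n:ℝ)^2/(θ+n)^4 else 0)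
    ≤ θ*(n:ℝ)^3/(3*(θ+n)^3) + (if θ ≤ (n:ℝ) then 1/8 else 0) := by
  induction n with
  | zero =>
    rw [if_neg (by simpa using hθ.not_ge), if_neg (by simpa using hθ.not_ge)]
    simp
  | succ n ih =>
    rw [Finset.sum_range_succ]
    push_cast
    push_cast at ih
    have e1 : θ + ((n:ℝ) + 1) = θ + (n:ℝ) + 1 := by ring
    rw [e1]
    have hn0 : (0:ℝ) ≤ (n:ℝ) := Nat.cast_nonneg n
    rcases le_or_gt θ (n:ℝ) with hc | hc
    · simp only [if_pos hc] at ih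
      simp only [if_pos (by linarith : θ ≤ (n:ℝ)+1)]
      have hB := keyB θ n hθ hc
      linarith
    · simp only [if_neg hc.not_ge] at ih
      rcases le_or_gt θ ((n:ℝ)+1) with hc2 | hc2
      · simp only [if_pos hc2]
        have h1 := fbound θ n hθ hn0
        have h2 := fbound θ ((n:ℝ)+1) hθ (by linarith)
        rw [e1] at h2
        have hF := Fmono θ n hθ hn0
        linarith
      · simp only [if_neg hc2.not_ge]
        have hA := keyA θ n hθ hn0 (by linarith)
        linarith

theorem stmt_14 (θ : ℝ) (hθ : 0 < θ) (n : ℕ) (hn : 1 ≤ n) :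
    ∑ i ∈ Finset.range n, (θ / (θ + i) * (1 - θ / (θ + i))) ^ 2 ≤
      θ * (1 / 3 - θ / (n + θ) + θ ^ 2 / (n + θ) ^ 2 - θ ^ 3 / (3 * (n + θ) ^ 3)) + 2 := by
  have hsum : ∀ i ∈ Finset.range n, (θ / (θ + i) * (1 - θ / (θ + i))) ^ 2
      = θ^2*(i:ℝ)^2/(θ+i)^4 := by
    intro i _
    have hi : (0:ℝ) < θ + i := by positivity
    field_simp
    ring
  rw [Finset.sum_congr rfl hsum]
  have haux := aux θ hθ n
  have hg : 0 ≤ (if θ ≤ (n:ℝ) then θ^2*(n:ℝ)^2/(θ+n)^4 else 0) := by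
    split_ifs
    · positivity
    · exact le_rfl
  have hb : (if θ ≤ (n:ℝ) then (1:ℝ)/8 else 0) ≤ 1/8 := by
    split_ifs <;> norm_num
  have hRHS : θ * (1 / 3 - θ / (n + θ) + θ ^ 2 / (n + θ) ^ 2 - θ ^ 3 / (3 * (n + θ) ^ 3))
      = θ*(n:ℝ)^3/(3*(θ+n)^3) := by
    have hnθ : (0:ℝ) < (n:ℝ) + θ := by positivity
    have hθn : (0:ℝ) < θ + (n:ℝ) := by positivity
    field_simp
    ring
  rw [hRHS]
  linarith
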